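/- Let f_Q be a Q-level quantizer satisfying the Lloyd–Max stationarity condition, i.e., ∫_{τ_i}^{τ_{i+1}} (m_i − τ) φ(τ) dτ = 0 for every i = 1, …, Q, and set μ = E[f_Q(g) g] and e_Q = E[(f_Q(g) − g)²]. Then η² := E[(f_Q(g) − μ g)² g²] ≤ 3(μ + 1)² = 3(2 − e_Q)². -/

import Mathlib

noncomputable section
open MeasureTheory ProbabilityTheory Real Set

/-- The standard Gaussian measure on `ℝ`. -/
def stdGauss : Measure ℝ := gaussianReal 0 1

instance : IsProbabilityMeasure stdGauss := by unfold stdGauss; infer_instance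

/-- A `Q`-level quantizer: thresholds `-∞ = τ₁ < τ₂ < … < τ_{Q+1} = +∞` (indexed here by
`Fin (Q+1)`, so `τ 0 = ⊥` and `τ (Fin.last Q) = ⊤`) and values `m₁, …, m_Q`, with the
step function `f` equal to `m i` on the cell `[τ i, τ (i+1))`. -/
structure Quantizer (Q : ℕ) where
  m : Fin Q → ℝ
  τ : Fin (Q + 1) → EReal
  f : ℝ → ℝ
  τ_bot : τ 0 = ⊥
  τ_top : τ (Fin.last Q) = ⊤
  τ_mono : StrictMono τ
  f_eq : ∀ (i : Fin Q) (t : ℝ), τ i.castSucc ≤ (t : EReal) → (t : EReal) < τ i.succ → f t = m i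

/-- The `i`-th quantization cell `[τ_i, τ_{i+1})` (as a subset of `ℝ`). -/
def Quantizer.cell {Q : ℕ} (q : Quantizer Q) (i : Fin Q) : Set ℝ :=
  {t : ℝ | q.τ i.castSucc ≤ (t : EReal) ∧ (t : EReal) < q.τ i.succ}

/-- The mean squared error `E[(f_Q(g) - g)²]` of a quantizer. -/
def MSE {Q : ℕ} (q : Quantizer Q) : ℝ := ∫ t, (q.f t - t) ^ 2 ∂stdGauss

/-- Lloyd–Max stationarity: `∫_{τ_i}^{τ_{i+1}} (m_i − τ) φ(τ) dτ = 0` for every cell,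
written as an integral against the standard Gaussian measure. -/
def LloydMaxStationary {Q : ℕ} (q : Quantizer Q) : Prop :=
  ∀ i : Fin Q, ∫ t in q.cell i, (q.m i - t) ∂stdGauss = 0

/-!
Lloyd–Max stationarity says that `f_Q(g)` is the conditional expectation of `g` given the cell
containing `g`, so `g - f_Q(g)` is orthogonal to every function of `f_Q(g)`. Taking `f_Q(g)` itself
gives `μ = E[f_Q(g)²] ≥ 0` and `e_Q = 1 - μ`; taking `4 f_Q(g)³` and using that `x⁴` lies above
its tangents gives `E[f_Q(g)⁴] ≤ E[g⁴] = 3`. The bound on `η²` then follows by integrating the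
pointwise inequality `(a - μb)²b² ≤ (1 + μ)/2 · a⁴ + (1/2 + 3μ/2 + μ²) · b⁴`, valid for `μ ≥ 0`.
-/

theorem integral_pow_two_mul_stdGauss (k : ℕ) :
    ∫ t, t ^ (2 * k) ∂stdGauss = 2 ^ k * Gamma (k + 1 / 2) / √π := by
  have hq : (-1 : ℝ) < (2 * k : ℕ) := by norm_cast; omega
  have hsym : ∫ t : ℝ, t ^ (2 * k) * rexp (-(1 / 2) * t ^ 2)
      = 2 * ∫ t in Ioi (0 : ℝ), t ^ ((2 * k : ℕ) : ℝ) * rexp (-(1 / 2) * t ^ (2 : ℝ)) := by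
    simp_rw [rpow_natCast, rpow_two]
    rw [← integral_comp_abs (f := fun t => t ^ (2 * k) * rexp (-(1 / 2) * t ^ 2))]
    simp_rw [pow_mul, sq_abs]
  have hexp : ((1 : ℝ) / 2) ^ (-((2 * k : ℕ) + 1 : ℝ) / 2) = 2 ^ k * √2 := by
    rw [one_div, inv_rpow zero_le_two, ← rpow_neg zero_le_two, sqrt_eq_rpow, ← rpow_natCast,
      ← rpow_add two_pos]
    congr 1
    push_cast; ring
  rw [stdGauss, integral_gaussianReal_eq_integral_smul one_ne_zero]
  simp_rw [gaussianPDFReal, smul_eq_mul, mul_assoc, integral_const_mul]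
  simp only [NNReal.coe_one, mul_one, sub_zero]
  rw [show (fun x : ℝ => rexp (-x ^ 2 / 2) * x ^ (2 * k))
      = fun t => t ^ (2 * k) * rexp (-(1 / 2) * t ^ 2) by ext x; ring_nf]
  rw [hsym, integral_rpow_mul_exp_neg_mul_rpow two_pos hq (by norm_num), hexp,
    show ((2 * k : ℕ) + 1 : ℝ) / 2 = k + 1 / 2 by push_cast; ring, sqrt_mul zero_le_two]
  field_simp

theorem integrable_pow_stdGauss (n : ℕ) : Integrable (fun t : ℝ => t ^ n) stdGauss :=
  (memLp_id_gaussianReal n).integrable_norm_pow'.mono' (by fun_prop)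
    (ae_of_all _ fun t => by simp)

theorem integrable_id_stdGauss : Integrable (fun t : ℝ => t) stdGauss :=
  (integrable_pow_stdGauss 1).congr (ae_of_all _ fun t => pow_one t)

theorem integral_sq_stdGauss : ∫ t, t ^ 2 ∂stdGauss = 1 := by
  have h := integral_pow_two_mul_stdGauss 1
  rw [Nat.cast_one, add_comm, Gamma_add_one one_half_pos.ne', Gamma_one_half_eq] at h
  rw [h]
  field_simp

theorem integral_pow_four_stdGauss : ∫ t, t ^ 4 ∂stdGauss = 3 := by
  have h := integral_pow_two_mul_stdGauss 2
  rw [Nat.cast_two, show (2 : ℝ) + 1 / 2 = 1 / 2 + 1 + 1 by norm_num,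
    Gamma_add_one (by norm_num), Gamma_add_one one_half_pos.ne', Gamma_one_half_eq] at h
  rw [h]
  field_simp
  norm_num

theorem integral_sub_mul_sq_mul_sq_le {α : Type*} [MeasurableSpace α] {ν : Measure α}
    {f g : α → ℝ} {c : ℝ} (hc : 0 ≤ c) (hf : Integrable (fun x => f x ^ 4) ν)
    (hg : Integrable (fun x => g x ^ 4) ν) (hfg : ∫ x, f x ^ 4 ∂ν ≤ ∫ x, g x ^ 4 ∂ν) :
    ∫ x, (f x - c * g x) ^ 2 * g x ^ 2 ∂ν ≤ (c + 1) ^ 2 * ∫ x, g x ^ 4 ∂ν := by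
  -- `2a²b² ≤ a⁴ + b⁴` and `a⁴ + 4ab³ + 3b⁴ = (a + b)²((a - b)² + 2b²) ≥ 0`
  have hpt : ∀ a b : ℝ, (a - c * b) ^ 2 * b ^ 2
      ≤ (1 + c) / 2 * a ^ 4 + (1 / 2 + 3 * c / 2 + c ^ 2) * b ^ 4 := fun a b => by
    nlinarith [sq_nonneg (a ^ 2 - b ^ 2), mul_nonneg hc (mul_nonneg (sq_nonneg (a + b))
      (add_nonneg (sq_nonneg (a - b)) (mul_nonneg zero_le_two (sq_nonneg b))))]
  calc ∫ x, (f x - c * g x) ^ 2 * g x ^ 2 ∂ν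
      ≤ ∫ x, ((1 + c) / 2 * f x ^ 4 + (1 / 2 + 3 * c / 2 + c ^ 2) * g x ^ 4) ∂ν :=
        integral_mono_of_nonneg (ae_of_all _ fun x => by positivity)
          ((hf.const_mul _).add (hg.const_mul _)) (ae_of_all _ fun x => hpt (f x) (g x))
    _ = (1 + c) / 2 * ∫ x, f x ^ 4 ∂ν + (1 / 2 + 3 * c / 2 + c ^ 2) * ∫ x, g x ^ 4 ∂ν := by
        rw [integral_add (hf.const_mul _) (hg.const_mul _), integral_const_mul, integral_const_mul]
    _ ≤ (c + 1) ^ 2 * ∫ x, g x ^ 4 ∂ν := by nlinarith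

namespace Quantizer

variable {Q : ℕ} (q : Quantizer Q)

theorem exists_mem_cell (t : ℝ) : ∃ i, t ∈ q.cell i := by
  obtain ⟨j, hj, hmin⟩ := wellFounded_lt.has_min {j | (t : EReal) < q.τ j}
    ⟨Fin.last Q, by simp [q.τ_top]⟩
  obtain ⟨i, rfl⟩ := Fin.exists_succ_eq.mpr (show j ≠ 0 by rintro rfl; simp [q.τ_bot] at hj)
  exact ⟨i, not_lt.mp fun h => hmin _ h Fin.castSucc_lt_succ, hj⟩

theorem eq_of_mem_cell {t : ℝ} {i j : Fin Q} (hi : t ∈ q.cell i) (hj : t ∈ q.cell j) :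
    i = j := by
  by_contra hne
  wlog hij : i < j generalizing i j
  · exact this hj hi (Ne.symm hne) ((Ne.symm hne).lt_of_le (not_lt.mp hij))
  exact (q.τ_mono.monotone (Fin.succ_le_castSucc_iff.mpr hij)).trans hj.1 |>.not_gt hi.2

theorem measurableSet_cell (i : Fin Q) : MeasurableSet (q.cell i) :=
  measurable_coe_real_ereal measurableSet_Ico

def cellIndex (t : ℝ) : Fin Q := (q.exists_mem_cell t).choose

theorem mem_cell_cellIndex (t : ℝ) : t ∈ q.cell (q.cellIndex t) :=
  (q.exists_mem_cell t).choose_spec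

theorem cellIndex_eq_iff {t : ℝ} {i : Fin Q} : q.cellIndex t = i ↔ t ∈ q.cell i :=
  ⟨fun h => h ▸ q.mem_cell_cellIndex t, q.eq_of_mem_cell (q.mem_cell_cellIndex t)⟩

theorem f_eq_m_cellIndex (t : ℝ) : q.f t = q.m (q.cellIndex t) :=
  q.f_eq _ t (q.mem_cell_cellIndex t).1 (q.mem_cell_cellIndex t).2

theorem measurable_cellIndex : Measurable q.cellIndex :=
  measurable_to_countable' fun i => by
    simpa only [Set.preimage, Set.mem_singleton_iff, q.cellIndex_eq_iff, Set.ofPred_mem_eq] using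
      q.measurableSet_cell i

theorem measurable_comp_f (h : ℝ → ℝ) : Measurable fun t => h (q.f t) := by
  simp_rw [q.f_eq_m_cellIndex]
  exact (measurable_of_countable (h ∘ q.m)).comp q.measurable_cellIndex

theorem abs_comp_f_le (h : ℝ → ℝ) (t : ℝ) : |h (q.f t)| ≤ ∑ i, |h (q.m i)| := by
  rw [q.f_eq_m_cellIndex]
  exact Finset.single_le_sum (f := fun i => |h (q.m i)|) (fun i _ => abs_nonneg _)
    (Finset.mem_univ _)

theorem integrable_comp_f_mul {ν : Measure ℝ} (h : ℝ → ℝ) {g : ℝ → ℝ} (hg : Integrable g ν) :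
    Integrable (fun t => h (q.f t) * g t) ν :=
  hg.bdd_mul (q.measurable_comp_f h).aestronglyMeasurable
    (ae_of_all _ fun t => q.abs_comp_f_le h t)

theorem integrable_comp_f {ν : Measure ℝ} [IsFiniteMeasure ν] (h : ℝ → ℝ) :
    Integrable (fun t => h (q.f t)) ν :=
  .of_bound (q.measurable_comp_f h).aestronglyMeasurable _
    (ae_of_all _ fun t => q.abs_comp_f_le h t)

theorem integral_eq_sum_setIntegral_cell {ν : Measure ℝ} {g : ℝ → ℝ} (hg : Integrable g ν) :
    ∫ t, g t ∂ν = ∑ i, ∫ t in q.cell i, g t ∂ν := by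
  have hcover : ⋃ i, q.cell i = univ :=
    eq_univ_of_forall fun t => mem_iUnion.mpr (q.exists_mem_cell t)
  rw [← integral_iUnion_fintype q.measurableSet_cell
      (fun i j hij => disjoint_left.mpr fun t hi hj => hij (q.eq_of_mem_cell hi hj))
      fun i => hg.integrableOn, hcover, Measure.restrict_univ]

theorem integrable_id_sub_f_stdGauss : Integrable (fun t => t - q.f t) stdGauss :=
  integrable_id_stdGauss.sub (q.integrable_comp_f fun x => x)

end Quantizer

namespace LloydMaxStationary

variable {Q : ℕ} {q : Quantizer Q}

theorem integral_comp_f_mul_sub_f (hq : LloydMaxStationary q) (h : ℝ → ℝ) :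
    ∫ t, h (q.f t) * (t - q.f t) ∂stdGauss = 0 := by
  rw [q.integral_eq_sum_setIntegral_cell
    (q.integrable_comp_f_mul h q.integrable_id_sub_f_stdGauss)]
  refine Finset.sum_eq_zero fun i _ => ?_
  calc ∫ t in q.cell i, h (q.f t) * (t - q.f t) ∂stdGauss
      = ∫ t in q.cell i, -h (q.m i) * (q.m i - t) ∂stdGauss :=
        setIntegral_congr_fun (q.measurableSet_cell i) fun t ht => by
          rw [q.f_eq i t ht.1 ht.2]; ring
    _ = 0 := by rw [integral_const_mul, hq i, mul_zero]

theorem integral_f_mul_id (hq : LloydMaxStationary q) :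
    ∫ t, q.f t * t ∂stdGauss = ∫ t, q.f t ^ 2 ∂stdGauss := by
  have h := hq.integral_comp_f_mul_sub_f fun x => x
  simp_rw [mul_sub] at h
  rw [integral_sub (q.integrable_comp_f_mul (fun x => x) integrable_id_stdGauss)
    (q.integrable_comp_f fun x => x * x), sub_eq_zero] at h
  simpa only [sq] using h

theorem integral_f_sub_id_sq (hq : LloydMaxStationary q) :
    ∫ t, (q.f t - t) ^ 2 ∂stdGauss = 1 - ∫ t, q.f t * t ∂stdGauss := by
  have hft := q.integrable_comp_f_mul (fun x => x) integrable_id_stdGauss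
  calc ∫ t, (q.f t - t) ^ 2 ∂stdGauss
      = ∫ t, (t ^ 2 - q.f t * t - q.f t * (t - q.f t)) ∂stdGauss :=
        integral_congr_ae (ae_of_all _ fun t => by ring)
    _ = 1 - ∫ t, q.f t * t ∂stdGauss := by
        rw [integral_sub (f := fun t => t ^ 2 - q.f t * t)
            ((integrable_pow_stdGauss 2).sub hft)
            (q.integrable_comp_f_mul (fun x => x) q.integrable_id_sub_f_stdGauss),
          integral_sub (integrable_pow_stdGauss 2) hft, integral_sq_stdGauss,
          hq.integral_comp_f_mul_sub_f fun x => x, sub_zero]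

theorem integral_f_pow_four_le (hq : LloydMaxStationary q) :
    ∫ t, q.f t ^ 4 ∂stdGauss ≤ ∫ t, t ^ 4 ∂stdGauss := by
  have hcross := q.integrable_comp_f_mul (fun x => 4 * x ^ 3) q.integrable_id_sub_f_stdGauss
  calc ∫ t, q.f t ^ 4 ∂stdGauss
      = ∫ t, (q.f t ^ 4 + 4 * q.f t ^ 3 * (t - q.f t)) ∂stdGauss := by
        rw [integral_add (q.integrable_comp_f fun x => x ^ 4) hcross,
          hq.integral_comp_f_mul_sub_f fun x => 4 * x ^ 3, add_zero]
    _ ≤ ∫ t, t ^ 4 ∂stdGauss :=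
        integral_mono ((q.integrable_comp_f fun x => x ^ 4).add hcross)
          (integrable_pow_stdGauss 4) fun t => by
            nlinarith [sq_nonneg (t - q.f t), sq_nonneg (t + q.f t), sq_nonneg (q.f t)]

end LloydMaxStationary

/-- Under Lloyd–Max stationarity, with `μ = E[f_Q(g) g]` and
`e_Q = E[(f_Q(g)-g)²]`, we have `η² = E[(f_Q(g) - μ g)² g²] ≤ 3(μ+1)² = 3(2-e_Q)²`. -/
theorem lloydMax_eta_sq_bound {Q : ℕ} (q : Quantizer Q)
    (hq : LloydMaxStationary q)
    (μ : ℝ) (hμ : μ = ∫ t, q.f t * t ∂stdGauss)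
    (eQ : ℝ) (heQ : eQ = ∫ t, (q.f t - t) ^ 2 ∂stdGauss) :
    (∫ t, (q.f t - μ * t) ^ 2 * t ^ 2 ∂stdGauss ≤ 3 * (μ + 1) ^ 2) ∧
    3 * (μ + 1) ^ 2 = 3 * (2 - eQ) ^ 2 := by
  have hμ_nonneg : 0 ≤ μ := hμ ▸ hq.integral_f_mul_id ▸ integral_nonneg fun t => sq_nonneg _
  constructor
  · calc ∫ t, (q.f t - μ * t) ^ 2 * t ^ 2 ∂stdGauss
        ≤ (μ + 1) ^ 2 * ∫ t, t ^ 4 ∂stdGauss :=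
          integral_sub_mul_sq_mul_sq_le hμ_nonneg (q.integrable_comp_f fun x => x ^ 4)
            (integrable_pow_stdGauss 4) hq.integral_f_pow_four_le
      _ = 3 * (μ + 1) ^ 2 := by rw [integral_pow_four_stdGauss, mul_comm]
  · rw [heQ, hq.integral_f_sub_id_sq, ← hμ]
    ring
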